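/- arXiv:2001.01066 — 3 statements merged into one kernel-verified Lean document; each statement's English description precedes it below -/
import Mathlib

section
/- If a W-orbit O on ℤ² satisfies O ∩ (P⁺ ∪ −P⁺) = ∅, then O contains a point of the form (k, −l) with k and l positive integers. -/
/-!
A point outside `P⁺ ∪ -P⁺` has coordinates of strictly opposite signs. If the orbit's base point
`v = (x, y)` has `x > 0 > y` we are done; otherwise `x < 0 < y`, and then `r1 v = (-x, y + b x)`
has positive first coordinate, so, lying in the orbit as well, it has negative second coordinate.
-/

/-- Simple reflection `r1 : (x, y) ↦ (-x, y + b x)` on the weight lattice `ℤ × ℤ`. -/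
def r1 (b : ℤ) : Equiv.Perm (ℤ × ℤ) :=
  Function.Involutive.toPerm (fun v => (-v.1, v.2 + b * v.1))
    (fun v => by simp [Prod.ext_iff])

/-- Simple reflection `r2 : (x, y) ↦ (x + a y, -y)` on the weight lattice `ℤ × ℤ`. -/
def r2 (a : ℤ) : Equiv.Perm (ℤ × ℤ) :=
  Function.Involutive.toPerm (fun v => (v.1 + a * v.2, -v.2))
    (fun v => by simp [Prod.ext_iff])

/-- The Weyl group `W`, the group of bijections of `ℤ × ℤ` generated by `r1` and `r2`. -/
def W (a b : ℤ) : Subgroup (Equiv.Perm (ℤ × ℤ)) :=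
  Subgroup.closure {r1 b, r2 a}

/-- The `W`-orbit of a point `v ∈ ℤ × ℤ`. -/
def Worbit (a b : ℤ) (v : ℤ × ℤ) : Set (ℤ × ℤ) :=
  {w : ℤ × ℤ | ∃ g ∈ W a b, g v = w}

/-- The set of dominant integral weights `P⁺`. -/
def Pplus : Set (ℤ × ℤ) := {v : ℤ × ℤ | 0 ≤ v.1 ∧ 0 ≤ v.2}

/-- The set of antidominant integral weights `-P⁺`. -/
def Pminus : Set (ℤ × ℤ) := {v : ℤ × ℤ | v.1 ≤ 0 ∧ v.2 ≤ 0}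

theorem r1_apply (b : ℤ) (v : ℤ × ℤ) : r1 b v = (-v.1, v.2 + b * v.1) := rfl

theorem r1_mem_W (a b : ℤ) : r1 b ∈ W a b :=
  Subgroup.subset_closure (Set.mem_insert _ _)

theorem mem_Worbit_self (a b : ℤ) (v : ℤ × ℤ) : v ∈ Worbit a b v :=
  ⟨1, one_mem _, rfl⟩

theorem apply_mem_Worbit {a b : ℤ} {v w : ℤ × ℤ} {g : Equiv.Perm (ℤ × ℤ)} (hg : g ∈ W a b)
    (hw : w ∈ Worbit a b v) : g w ∈ Worbit a b v := by
  obtain ⟨h, hh, rfl⟩ := hw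
  exact ⟨g * h, mul_mem hg hh, rfl⟩

theorem pos_neg_or_neg_pos_of_notMem_Pplus_union_Pminus {w : ℤ × ℤ}
    (hw : w ∉ Pplus ∪ Pminus) : (0 < w.1 ∧ w.2 < 0) ∨ (w.1 < 0 ∧ 0 < w.2) := by
  simp only [Set.mem_union, Pplus, Pminus, Set.mem_ofPred_eq, not_or] at hw
  omega

theorem orbit_avoids_dominant_contains_pos_neg_general (a b : ℤ) (v : ℤ × ℤ)
    (h : Worbit a b v ∩ (Pplus ∪ Pminus) = ∅) :
    ∃ k l : ℤ, 0 < k ∧ 0 < l ∧ (k, -l) ∈ Worbit a b v := by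
  have avoid : ∀ w ∈ Worbit a b v, w ∉ Pplus ∪ Pminus := fun w hw hP =>
    Set.eq_empty_iff_forall_notMem.mp h w ⟨hw, hP⟩
  have of_fst_pos : ∀ w ∈ Worbit a b v, 0 < w.1 →
      ∃ k l : ℤ, 0 < k ∧ 0 < l ∧ (k, -l) ∈ Worbit a b v := by
    intro w hw hw₁
    have hw₂ : w.2 < 0 := by
      have := pos_neg_or_neg_pos_of_notMem_Pplus_union_Pminus (avoid w hw)
      omega
    exact ⟨w.1, -w.2, hw₁, neg_pos.mpr hw₂, by simpa using hw⟩
  rcases pos_neg_or_neg_pos_of_notMem_Pplus_union_Pminus (avoid v (mem_Worbit_self a b v))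
    with ⟨hv₁, -⟩ | ⟨hv₁, -⟩
  · exact of_fst_pos v (mem_Worbit_self a b v) hv₁
  · exact of_fst_pos (r1 b v) (apply_mem_Worbit (r1_mem_W a b) (mem_Worbit_self a b v))
      (by rw [r1_apply]; exact neg_pos.mpr hv₁)

theorem orbit_avoids_dominant_contains_pos_neg (a b : ℤ) (ha : 2 ≤ a) (hb : 2 ≤ b)
    (hab : 4 < a * b) (v : ℤ × ℤ)
    (h : Worbit a b v ∩ (Pplus ∪ Pminus) = ∅) :
    ∃ k l : ℤ, 0 < k ∧ 0 < l ∧ (k, -l) ∈ Worbit a b v :=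
  orbit_avoids_dominant_contains_pos_neg_general a b v h
end

section
/- Let k, l be positive integers with k < l < (b−1)k. Then p(m) > 0 for all m ∈ ℤ, p(m) < p(m+1) for all m ≥ 1, and p(m) > p(m+1) for all m ≤ 0; that is, the sequence satisfies ⋯ > p(−1) > p(0) = l > p(1) = k < p(2) < ⋯. -/
/-- `pSeq a b k l p` says that `p : ℤ → ℤ` is the (unique) sequence with `p 0 = l`,
`p 1 = k`, and `p (m+2) = b * p (m+1) - p m` for even `m`,
`p (m+2) = a * p (m+1) - p m` for odd `m`. -/
def pSeq (a b k l : ℤ) (p : ℤ → ℤ) : Prop :=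
  p 0 = l ∧ p 1 = k ∧
    ∀ m : ℤ, p (m + 2) = (if Even m then b else a) * p (m + 1) - p m

/-! A recurrence `q (m + 2) = c m * q (m + 1) - q m` with all `c m ≥ 2` is symmetric under
reversing the index, and a positive strict increase `0 < x < y` propagates: the next term
`c * y - x ≥ 2 y - x` exceeds `y`. So one increasing step forces increase from there on, and one
decreasing step forces decrease (read backwards) before it. -/

section TwoTermRecurrence

variable {R : Type*} [CommRing R] [LinearOrder R] [IsStrictOrderedRing R]

theorem lt_mul_sub_of_pos_of_lt {x y c : R} (hx : 0 < x) (hxy : x < y) (hc : 2 ≤ c) :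
    y < c * y - x := by
  nlinarith

variable {c q : ℤ → R} (hc : ∀ m, 2 ≤ c m) (hq : ∀ m, q (m + 2) = c m * q (m + 1) - q m)
include hc hq

theorem pos_and_lt_succ_of_le {n : ℤ} (hpos : 0 < q n) (hlt : q n < q (n + 1)) :
    ∀ m, n ≤ m → 0 < q m ∧ q m < q (m + 1) := by
  refine Int.leInduction ⟨hpos, hlt⟩ fun m _ ⟨hm_pos, hm_lt⟩ => ⟨hm_pos.trans hm_lt, ?_⟩
  rw [add_assoc, one_add_one_eq_two, hq m]
  exact lt_mul_sub_of_pos_of_lt hm_pos hm_lt (hc m)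

theorem pos_and_succ_lt_of_le {n : ℤ} (hpos : 0 < q (n + 1)) (hlt : q (n + 1) < q n) :
    ∀ m, m ≤ n → 0 < q (m + 1) ∧ q (m + 1) < q m := by
  refine Int.leInductionDown ⟨hpos, hlt⟩ fun m _ ⟨hm_pos, hm_lt⟩ => ?_
  have hrec := hq (m - 1)
  rw [show m - 1 + 2 = m + 1 by ring, sub_add_cancel] at hrec
  rw [sub_add_cancel]
  refine ⟨hm_pos.trans hm_lt, ?_⟩
  have := lt_mul_sub_of_pos_of_lt hm_pos hm_lt (hc (m - 1))
  linarith

end TwoTermRecurrence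

theorem p_valley_case_ii_general (a b k l : ℤ) (ha : 2 ≤ a) (hb : 2 ≤ b)
    (hk : 0 < k) (hkl : k < l) (hlb : l < (b - 1) * k)
    (p : ℤ → ℤ) (hp : pSeq a b k l p) :
    (∀ m : ℤ, 0 < p m) ∧ (∀ m : ℤ, 1 ≤ m → p m < p (m + 1)) ∧
      (∀ m : ℤ, m ≤ 0 → p (m + 1) < p m) := by
  obtain ⟨h0, h1, hrec⟩ := hp
  have hc : ∀ m : ℤ, 2 ≤ (if Even m then b else a) := fun m => by split <;> assumption
  have h2 : p 2 = b * k - l := by simpa [h0, h1] using hrec 0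
  have fwd := pos_and_lt_succ_of_le hc hrec (n := 1) (by rw [h1]; exact hk)
    (by rw [h1, one_add_one_eq_two, h2]; linarith)
  have bwd := pos_and_succ_lt_of_le hc hrec (n := 0) (by rw [zero_add, h1]; exact hk)
    (by rw [zero_add, h0, h1]; exact hkl)
  refine ⟨fun m => ?_, fun m hm => (fwd m hm).2, fun m hm => (bwd m hm).2⟩
  rcases le_or_gt m 0 with hm | hm
  · exact (bwd m hm).1.trans (bwd m hm).2
  · exact (fwd m hm).1

theorem p_valley_case_ii (a b k l : ℤ) (ha : 2 ≤ a) (hb : 2 ≤ b) (hab : 4 < a * b)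
    (hk : 0 < k) (hkl : k < l) (hlb : l < (b - 1) * k)
    (p : ℤ → ℤ) (hp : pSeq a b k l p) :
    (∀ m : ℤ, 0 < p m) ∧ (∀ m : ℤ, 1 ≤ m → p m < p (m + 1)) ∧
      (∀ m : ℤ, m ≤ 0 → p (m + 1) < p m) :=
  p_valley_case_ii_general a b k l ha hb hk hkl hlb p hp
end

section
/- Under the stated assumptions, 0 < k − l·c < p(m) for every m ∈ ℤ; in particular (k − l·c)/p(m) < 1 for all m ∈ ℤ. -/
/-!
Since `c < k / l < c + 1`, the integer `k - l * c` lies strictly between `0` and `l`. On the other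
hand `l ≤ p m` for every `m`: a recurrence `p (m + 2) = t * p (m + 1) - p m` with `t ≥ 2` makes the
successive differences of a nonnegative sequence nondecreasing, so `p` grows away from `m = 0` in
both directions as soon as `p 0 = l` is at most both neighbours `p 1 = k` and `p (-1) = a * l - k`.
-/

theorem monotone_of_two_le_coeff {q t : ℕ → ℤ} (ht : ∀ n, 2 ≤ t n)
    (hrec : ∀ n, q (n + 2) = t n * q (n + 1) - q n) (h0 : 0 ≤ q 0) (h01 : q 0 ≤ q 1) :
    Monotone q := by
  have key : ∀ n, q 0 ≤ q n ∧ q n ≤ q (n + 1) := by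
    intro n
    induction n with
    | zero => exact ⟨le_rfl, h01⟩
    | succ n ih =>
      have hn1 : q 0 ≤ q (n + 1) := ih.1.trans ih.2
      refine ⟨hn1, ?_⟩
      -- `q (n + 2) - q (n + 1) = (t n - 2) * q (n + 1) + (q (n + 1) - q n)`
      have : 0 ≤ (t n - 2) * q (n + 1) := mul_nonneg (by linarith [ht n]) (by linarith)
      linarith [hrec n, ih.2]
  exact monotone_nat_of_le_succ fun n => (key n).2

theorem le_apply_of_two_le_coeff {p t : ℤ → ℤ} (ht : ∀ m, 2 ≤ t m)
    (hrec : ∀ m, p (m + 2) = t m * p (m + 1) - p m) (h0 : 0 ≤ p 0) (h01 : p 0 ≤ p 1)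
    (h0neg : p 0 ≤ p (-1)) (m : ℤ) : p 0 ≤ p m := by
  have hfwd : Monotone fun n : ℕ => p n :=
    monotone_of_two_le_coeff (t := fun n => t n) (fun n => ht n)
      (fun n => by simpa using hrec n) (by simpa using h0) (by simpa using h01)
  have hbwd : Monotone fun n : ℕ => p (-n) := by
    refine monotone_of_two_le_coeff (t := fun n => t (-n - 2)) (fun n => ht _) (fun n => ?_)
      (by simpa using h0) (by simpa using h0neg)
    -- the recurrence read backwards at `-n - 2` has the same shape
    have h := hrec (-n - 2)
    rw [show -(n : ℤ) - 2 + 2 = -n by ring, show -(n : ℤ) - 2 + 1 = -(n + 1) by ring] at h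
    push_cast
    rw [show -((n : ℤ) + 2) = -n - 2 by ring]
    linarith
  rcases m.eq_nat_or_neg with ⟨n, rfl | rfl⟩
  · simpa using hfwd (Nat.zero_le n)
  · simpa using hbwd (Nat.zero_le n)

theorem sub_mul_mem_Ioo_of_div_lt_inv_lt {k l c : ℤ} (hk : 0 < k) (hl : 0 < l)
    (hcl : (c : ℚ) / k < 1 / l) (hcr : (1 : ℚ) / l < (c + 1) / k) :
    k - l * c ∈ Set.Ioo 0 l := by
  have hkQ : (0 : ℚ) < k := by exact_mod_cast hk
  have hlQ : (0 : ℚ) < l := by exact_mod_cast hl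
  rw [div_lt_div_iff₀ hkQ hlQ] at hcl
  rw [div_lt_div_iff₀ hlQ hkQ] at hcr
  constructor
  · have : (l : ℚ) * c < k := by linarith
    exact_mod_cast sub_pos.mpr this
  · have : (k : ℚ) < l * c + l := by linarith
    exact_mod_cast (by linarith : (k : ℚ) - l * c < l)

namespace pSeq

variable {a b k l : ℤ} {p : ℤ → ℤ}

theorem apply_neg_one (hp : pSeq a b k l p) : p (-1) = a * l - k := by
  obtain ⟨hp0, hp1, hrec⟩ := hp
  have h := hrec (-1)
  rw [if_neg (by decide), show (-1 : ℤ) + 2 = 1 by norm_num, show (-1 : ℤ) + 1 = 0 by norm_num,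
    hp0, hp1] at h
  linarith

theorem le_apply (hp : pSeq a b k l p) (ha : 2 ≤ a) (hb : 2 ≤ b) (hl : 0 ≤ l) (hlk : l ≤ k)
    (hka : k ≤ (a - 1) * l) (m : ℤ) : l ≤ p m := by
  have hneg := hp.apply_neg_one
  obtain ⟨hp0, hp1, hrec⟩ := hp
  rw [← hp0]
  refine le_apply_of_two_le_coeff (fun m => ?_) hrec (hp0 ▸ hl) (by rw [hp0, hp1]; exact hlk)
    (by rw [hp0, hneg]; linarith) m
  split_ifs <;> assumption

end pSeq

theorem k_sub_lc_pos_lt_p_general (a b k l : ℤ) (ha : 2 ≤ a) (hb : 2 ≤ b)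
    (hl : 1 < l) (hlk : l < k) (hka : k < (a - 1) * l)
    (c : ℤ)
    (hcl : (c : ℚ) / k < 1 / l) (hcr : (1 : ℚ) / l < (c + 1) / k)
    (p : ℤ → ℤ) (hp : pSeq a b k l p) :
    ∀ m : ℤ, 0 < k - l * c ∧ k - l * c < p m ∧ ((k : ℚ) - l * c) / (p m) < 1 := by
  intro m
  obtain ⟨hpos, hlt⟩ := sub_mul_mem_Ioo_of_div_lt_inv_lt (by omega) (by omega) hcl hcr
  have hlp : l ≤ p m := hp.le_apply ha hb (by omega) hlk.le hka.le m
  have hlt_p : k - l * c < p m := hlt.trans_le hlp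
  refine ⟨hpos, hlt_p, (div_lt_one (by exact_mod_cast hpos.trans hlt_p)).mpr ?_⟩
  exact_mod_cast hlt_p

theorem k_sub_lc_pos_lt_p (a b k l : ℤ) (ha : 2 ≤ a) (hb : 2 ≤ b) (hab : 4 < a * b)
    (hl : 1 < l) (hlk : l < k) (hka : k < (a - 1) * l) (hcop : IsCoprime k l)
    (c : ℤ) (hc1 : 1 ≤ c) (hck : c ≤ k - 1)
    (hcl : (c : ℚ) / k < 1 / l) (hcr : (1 : ℚ) / l < (c + 1) / k)
    (p : ℤ → ℤ) (hp : pSeq a b k l p) :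
    ∀ m : ℤ, 0 < k - l * c ∧ k - l * c < p m ∧ ((k : ℚ) - l * c) / (p m) < 1 :=
  k_sub_lc_pos_lt_p_general a b k l ha hb hl hlk hka c hcl hcr p hp
end
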